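/- arXiv:1403.0781 — 2 statements merged into one kernel-verified Lean document; each statement's English description precedes it below -/
import Mathlib

section
/- Work on ℝ^{K+4} with coordinates (x, u₀, u₁, v₀, v₁, …, v_K), K ≥ 6, let F be a smooth function of (x, u₀, v₀, u₁, v₁, v₂) regarded as a function on ℝ^{K+4}, and let D = ∂/∂x + u₁∂/∂u₀ + F∂/∂u₁ + Σ_{r=0}^{K−1} v_{r+1}∂/∂v_r. Set α₀ = du₀ − u₁dx, α₁ = du₁ − Fdx, β_r = dv_r − v_{r+1}dx, α := α₁ − F_{v₂}β₁, A := F_{v₁} + F_{u₁}F_{v₂} − DF_{v₂}, β := α − Aβ₀, γ := α₀ − F_{v₂}β₀, B := F_{u₀}F_{v₂} + F_{u₁}A + F_{v₀} − DA, and C := A − DF_{v₂}. Then L_D β = F_{u₀}γ + F_{u₁}β + Bβ₀ and L_D γ = β + Cβ₀, where subscripts on F denote partial derivatives. -/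
noncomputable section

open scoped BigOperators

/-- Index set of the coordinates `x, u₀, u₁, v₀, …, v_K` of `ℝ^{K+4}`. -/
abbrev Coord (K : ℕ) := Unit ⊕ Unit ⊕ Unit ⊕ Fin (K + 1)

/-- A point of `ℝ^{K+4}`. -/
abbrev Pt (K : ℕ) := Coord K → ℝ

/-- The coordinate `x`. -/
def ix (K : ℕ) : Coord K := Sum.inl ()
/-- The coordinate `u₀`. -/
def iu0 (K : ℕ) : Coord K := Sum.inr (Sum.inl ())
/-- The coordinate `u₁`. -/
def iu1 (K : ℕ) : Coord K := Sum.inr (Sum.inr (Sum.inl ()))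
/-- The coordinate `v_r`. -/
def iv (K r : ℕ) (h : r < K + 1) : Coord K := Sum.inr (Sum.inr (Sum.inr ⟨r, h⟩))

/-- The partial derivative `∂f/∂(coordinate i)` at a point. -/
def pd {K : ℕ} (i : Coord K) (f : Pt K → ℝ) (p : Pt K) : ℝ :=
  fderiv ℝ f p (Pi.single i 1)

/-- The components of the total derivative vector field
`D = ∂/∂x + u₁∂/∂u₀ + F∂/∂u₁ + Σ_{r=0}^{K-1} v_{r+1}∂/∂v_r`. -/
def Dvf {K : ℕ} (F : Pt K → ℝ) : Pt K → Coord K → ℝ := fun p b =>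
  match b with
  | Sum.inl _ => 1
  | Sum.inr (Sum.inl _) => p (iu1 K)
  | Sum.inr (Sum.inr (Sum.inl _)) => F p
  | Sum.inr (Sum.inr (Sum.inr r)) =>
      if h : (r : ℕ) + 1 < K + 1 then p (iv K ((r : ℕ) + 1) h) else 0

/-- The Lie derivative of a 1-form `ω` (given by its components `ω_c`) along a
vector field `X` (given by its components `X^b`):
`(L_X ω)_c = Σ_b X^b ∂ω_c/∂b + Σ_b ω_b ∂X^b/∂c`. -/
def lieD {K : ℕ} (X ω : Pt K → Coord K → ℝ) : Pt K → Coord K → ℝ := fun p c =>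
  (∑ b : Coord K, X p b * pd b (fun q => ω q c) p)
    + ∑ b : Coord K, ω p b * pd c (fun q => X q b) p

/-- The contact form `α₀ = du₀ - u₁ dx` (components). -/
def α0 (K : ℕ) : Pt K → Coord K → ℝ := fun p c =>
  if c = iu0 K then 1 else if c = ix K then -p (iu1 K) else 0

/-- The contact form `α₁ = du₁ - F dx` (components). -/
def α1 {K : ℕ} (F : Pt K → ℝ) : Pt K → Coord K → ℝ := fun p c =>
  if c = iu1 K then 1 else if c = ix K then -F p else 0

/-- The contact form `β_r = dv_r - v_{r+1} dx` (components), for `r + 1 ≤ K`. -/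
def βf (K r : ℕ) (h : r + 1 < K + 1) : Pt K → Coord K → ℝ := fun p c =>
  if c = iv K r (by omega) then 1 else if c = ix K then -p (iv K (r + 1) h) else 0

/-- The total derivative acting on functions: `Df = Σ_b D^b ∂f/∂b`. -/
def Dop {K : ℕ} (F f : Pt K → ℝ) : Pt K → ℝ := fun p =>
  ∑ b : Coord K, Dvf F p b * pd b f p

/-- The reduced form `α := α₁ - F_{v₂} β₁`. -/
def αred (K : ℕ) (hK : 6 ≤ K) (F : Pt K → ℝ) : Pt K → Coord K → ℝ := fun p c =>
  α1 F p c - pd (iv K 2 (by omega)) F p * βf K 1 (by omega) p c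

/-- The coefficient `A := F_{v₁} + F_{u₁}F_{v₂} - DF_{v₂}`. -/
def Acoef (K : ℕ) (hK : 6 ≤ K) (F : Pt K → ℝ) : Pt K → ℝ := fun p =>
  pd (iv K 1 (by omega)) F p + pd (iu1 K) F p * pd (iv K 2 (by omega)) F p
    - Dop F (pd (iv K 2 (by omega)) F) p

/-- The form `β := α - Aβ₀`. -/
def βred (K : ℕ) (hK : 6 ≤ K) (F : Pt K → ℝ) : Pt K → Coord K → ℝ := fun p c =>
  αred K hK F p c - Acoef K hK F p * βf K 0 (by omega) p c

/-- The form `γ := α₀ - F_{v₂}β₀`. -/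
def γred (K : ℕ) (hK : 6 ≤ K) (F : Pt K → ℝ) : Pt K → Coord K → ℝ := fun p c =>
  α0 K p c - pd (iv K 2 (by omega)) F p * βf K 0 (by omega) p c

/-- The coefficient `B := F_{u₀}F_{v₂} + F_{u₁}A + F_{v₀} - DA`. -/
def Bcoef (K : ℕ) (hK : 6 ≤ K) (F : Pt K → ℝ) : Pt K → ℝ := fun p =>
  pd (iu0 K) F p * pd (iv K 2 (by omega)) F p + pd (iu1 K) F p * Acoef K hK F p
    + pd (iv K 0 (by omega)) F p - Dop F (Acoef K hK F) p

/-- The coefficient `C := A - DF_{v₂}`. -/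
def Ccoef (K : ℕ) (hK : 6 ≤ K) (F : Pt K → ℝ) : Pt K → ℝ := fun p =>
  Acoef K hK F p - Dop F (pd (iv K 2 (by omega)) F) p


section Aux
variable {K : ℕ}

lemma contDiff_pd {f : Pt K → ℝ} (hf : ContDiff ℝ (⊤ : ℕ∞) f) (i : Coord K) :
    ContDiff ℝ (⊤ : ℕ∞) (pd i f) :=
  (hf.fderiv_right (by simp)).clm_apply contDiff_const

lemma contDiff_coord (j : Coord K) : ContDiff ℝ (⊤ : ℕ∞) (fun q : Pt K => q j) :=
  (ContinuousLinearMap.proj j : Pt K →L[ℝ] ℝ).contDiff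

lemma diffAt {f : Pt K → ℝ} (hf : ContDiff ℝ (⊤ : ℕ∞) f) (p : Pt K) :
    DifferentiableAt ℝ f p := (hf.differentiable (by simp)) p

lemma pd_const (i : Coord K) (a : ℝ) (p : Pt K) : pd i (fun _ => a) p = 0 := by
  simp [pd]

lemma pd_coord (i j : Coord K) (p : Pt K) :
    pd i (fun q => q j) p = if j = i then 1 else 0 := by
  have h : fderiv ℝ (fun q : Pt K => q j) p
      = (ContinuousLinearMap.proj j : Pt K →L[ℝ] ℝ) :=
    (ContinuousLinearMap.proj j : Pt K →L[ℝ] ℝ).fderiv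
  simp [pd, h, Pi.single_apply]

lemma pd_add {f g : Pt K → ℝ} (hf : ContDiff ℝ (⊤ : ℕ∞) f) (hg : ContDiff ℝ (⊤ : ℕ∞) g)
    (i : Coord K) (p : Pt K) :
    pd i (fun q => f q + g q) p = pd i f p + pd i g p := by
  simp [pd, fderiv_fun_add (diffAt hf p) (diffAt hg p)]

lemma pd_neg (f : Pt K → ℝ) (i : Coord K) (p : Pt K) :
    pd i (fun q => -f q) p = -pd i f p := by
  simp [pd, fderiv_neg]

lemma pd_mul {f g : Pt K → ℝ} (hf : ContDiff ℝ (⊤ : ℕ∞) f) (hg : ContDiff ℝ (⊤ : ℕ∞) g)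
    (i : Coord K) (p : Pt K) :
    pd i (fun q => f q * g q) p = pd i f p * g p + f p * pd i g p := by
  simp [pd, fderiv_fun_mul (diffAt hf p) (diffAt hg p)]
  ring

lemma contDiff_Dvf {F : Pt K → ℝ} (hF : ContDiff ℝ (⊤ : ℕ∞) F) (b : Coord K) :
    ContDiff ℝ (⊤ : ℕ∞) (fun p => Dvf F p b) := by
  rcases b with _ | _ | _ | r
  · exact contDiff_const
  · exact contDiff_coord _
  · exact hF
  · by_cases h : (r : ℕ) + 1 < K + 1
    · simpa [Dvf, h] using contDiff_coord (K := K) (iv K ((r:ℕ)+1) h)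
    · simpa [Dvf, h] using contDiff_const (c := (0:ℝ)) (E := Pt K)

lemma contDiff_Dop {F f : Pt K → ℝ} (hF : ContDiff ℝ (⊤ : ℕ∞) F) (hf : ContDiff ℝ (⊤ : ℕ∞) f) :
    ContDiff ℝ (⊤ : ℕ∞) (Dop F f) := by
  unfold Dop
  exact ContDiff.sum fun b _ => (contDiff_Dvf hF b).mul (contDiff_pd hf b)

lemma Dop_const (F : Pt K → ℝ) (a : ℝ) (p : Pt K) : Dop F (fun _ => a) p = 0 := by
  simp [Dop, pd_const]

lemma Dop_add {F f g : Pt K → ℝ} (hf : ContDiff ℝ (⊤ : ℕ∞) f) (hg : ContDiff ℝ (⊤ : ℕ∞) g) (p : Pt K) :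
    Dop F (fun q => f q + g q) p = Dop F f p + Dop F g p := by
  simp only [Dop, pd_add hf hg, mul_add, Finset.sum_add_distrib]

lemma Dop_neg (F f : Pt K → ℝ) (p : Pt K) :
    Dop F (fun q => -f q) p = -Dop F f p := by
  simp [Dop, pd_neg]

lemma Dop_mul {F f g : Pt K → ℝ} (hf : ContDiff ℝ (⊤ : ℕ∞) f) (hg : ContDiff ℝ (⊤ : ℕ∞) g) (p : Pt K) :
    Dop F (fun q => f q * g q) p = Dop F f p * g p + f p * Dop F g p := by
  simp only [Dop, pd_mul hf hg, mul_add, Finset.sum_add_distrib, ← Finset.sum_mul,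
    ← Finset.mul_sum, mul_assoc, mul_left_comm]
  ring_nf
  rw [Finset.mul_sum, Finset.mul_sum]
  congr 1 <;> exact Finset.sum_congr rfl fun b _ => by ring

lemma Dop_coord (F : Pt K → ℝ) (j : Coord K) (p : Pt K) :
    Dop F (fun q => q j) p = Dvf F p j := by
  unfold Dop
  rw [Finset.sum_eq_single j]
  · simp [pd_coord]
  · intro b _ hb; simp [pd_coord, Ne.symm hb]
  · simp

/-- The elementary 1-form `f · dj`. -/
def sform (j : Coord K) (f : Pt K → ℝ) : Pt K → Coord K → ℝ := fun q c =>
  if c = j then f q else 0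

lemma contDiff_sform (j : Coord K) {f : Pt K → ℝ} (hf : ContDiff ℝ (⊤ : ℕ∞) f) (c : Coord K) :
    ContDiff ℝ (⊤ : ℕ∞) (fun q => sform j f q c) := by
  unfold sform
  by_cases h : c = j <;> simp only [h, if_true, if_false] <;>
    first | exact hf | exact contDiff_const

lemma lieD_single (X : Pt K → Coord K → ℝ) (j : Coord K) (f : Pt K → ℝ)
    (p : Pt K) (c : Coord K) :
    lieD X (sform j f) p c
      = (if c = j then ∑ b : Coord K, X p b * pd b f p else 0)
        + f p * pd c (fun q => X q j) p := by
  unfold lieD sform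
  congr 1
  · by_cases h : c = j
    · simp [h]
    · simp [h, pd_const]
  · rw [Finset.sum_eq_single j]
    · simp
    · intro b _ hb; simp [hb]
    · simp

lemma lieD_add (X ω₁ ω₂ : Pt K → Coord K → ℝ)
    (h₁ : ∀ c, ContDiff ℝ (⊤ : ℕ∞) (fun q => ω₁ q c)) (h₂ : ∀ c, ContDiff ℝ (⊤ : ℕ∞) (fun q => ω₂ q c))
    (p : Pt K) (c : Coord K) :
    lieD X (fun q c' => ω₁ q c' + ω₂ q c') p c = lieD X ω₁ p c + lieD X ω₂ p c := by
  unfold lieD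
  simp only [pd_add (h₁ c) (h₂ c), mul_add, add_mul, Finset.sum_add_distrib]
  ring

lemma lieD_three (X : Pt K → Coord K → ℝ) (j1 j2 j3 : Coord K) (f1 f2 f3 : Pt K → ℝ)
    (hf1 : ContDiff ℝ (⊤ : ℕ∞) f1) (hf2 : ContDiff ℝ (⊤ : ℕ∞) f2) (hf3 : ContDiff ℝ (⊤ : ℕ∞) f3)
    (p : Pt K) (c : Coord K) :
    lieD X (fun q c' => sform j1 f1 q c' + (sform j2 f2 q c' + sform j3 f3 q c')) p c
      = ((if c = j1 then ∑ b : Coord K, X p b * pd b f1 p else 0)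
          + f1 p * pd c (fun q => X q j1) p)
        + (((if c = j2 then ∑ b : Coord K, X p b * pd b f2 p else 0)
          + f2 p * pd c (fun q => X q j2) p)
        + ((if c = j3 then ∑ b : Coord K, X p b * pd b f3 p else 0)
          + f3 p * pd c (fun q => X q j3) p)) := by
  calc lieD X (fun q c' => sform j1 f1 q c' + (sform j2 f2 q c' + sform j3 f3 q c')) p c
      = lieD X (sform j1 f1) p c
        + lieD X (fun q c' => sform j2 f2 q c' + sform j3 f3 q c') p c :=
        lieD_add X (sform j1 f1) (fun q c' => sform j2 f2 q c' + sform j3 f3 q c')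
          (fun c => contDiff_sform j1 hf1 c)
          (fun c => (contDiff_sform j2 hf2 c).add (contDiff_sform j3 hf3 c)) p c
    _ = _ := by
        rw [lieD_add X (sform j2 f2) (sform j3 f3)
          (fun c => contDiff_sform j2 hf2 c) (fun c => contDiff_sform j3 hf3 c) p c,
          lieD_single, lieD_single, lieD_single]

lemma lieD_four (X : Pt K → Coord K → ℝ) (j1 j2 j3 j4 : Coord K) (f1 f2 f3 f4 : Pt K → ℝ)
    (hf1 : ContDiff ℝ (⊤ : ℕ∞) f1) (hf2 : ContDiff ℝ (⊤ : ℕ∞) f2) (hf3 : ContDiff ℝ (⊤ : ℕ∞) f3)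
    (hf4 : ContDiff ℝ (⊤ : ℕ∞) f4) (p : Pt K) (c : Coord K) :
    lieD X (fun q c' => sform j1 f1 q c'
        + (sform j2 f2 q c' + (sform j3 f3 q c' + sform j4 f4 q c'))) p c
      = ((if c = j1 then ∑ b : Coord K, X p b * pd b f1 p else 0)
          + f1 p * pd c (fun q => X q j1) p)
        + (((if c = j2 then ∑ b : Coord K, X p b * pd b f2 p else 0)
          + f2 p * pd c (fun q => X q j2) p)
        + (((if c = j3 then ∑ b : Coord K, X p b * pd b f3 p else 0)
          + f3 p * pd c (fun q => X q j3) p)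
        + ((if c = j4 then ∑ b : Coord K, X p b * pd b f4 p else 0)
          + f4 p * pd c (fun q => X q j4) p))) := by
  calc lieD X (fun q c' => sform j1 f1 q c'
        + (sform j2 f2 q c' + (sform j3 f3 q c' + sform j4 f4 q c'))) p c
      = lieD X (sform j1 f1) p c
        + lieD X (fun q c' => sform j2 f2 q c' + (sform j3 f3 q c' + sform j4 f4 q c')) p c :=
        lieD_add X (sform j1 f1)
          (fun q c' => sform j2 f2 q c' + (sform j3 f3 q c' + sform j4 f4 q c'))
          (fun c => contDiff_sform j1 hf1 c)
          (fun c => (contDiff_sform j2 hf2 c).add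
            ((contDiff_sform j3 hf3 c).add (contDiff_sform j4 hf4 c))) p c
    _ = _ := by
        rw [lieD_three X j2 j3 j4 f2 f3 f4 hf2 hf3 hf4 p c, lieD_single]

lemma pd_high (hK : 6 ≤ K) {F : Pt K → ℝ} (hF : ContDiff ℝ (⊤ : ℕ∞) F)
    (hdep : ∀ p q : Pt K, p (ix K) = q (ix K) → p (iu0 K) = q (iu0 K) →
      p (iu1 K) = q (iu1 K) →
      (∀ (r : ℕ) (h : r < K + 1), r ≤ 2 → p (iv K r h) = q (iv K r h)) →
      F p = F q)
    {r : ℕ} (hr3 : 3 ≤ r) (h : r < K + 1) (p : Pt K) : pd (iv K r h) F p = 0 := by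
  set j : Coord K := iv K r h with hj
  set L : Pt K →L[ℝ] Pt K :=
    ContinuousLinearMap.id ℝ (Pt K)
      - (ContinuousLinearMap.proj j).smulRight (Pi.single j 1) with hL
  have hLapp : ∀ (q : Pt K) (i : Coord K), L q i = q i - q j * (Pi.single j (1:ℝ) : Pt K) i := by
    intro q i
    simp [hL, ContinuousLinearMap.smulRight_apply, ContinuousLinearMap.proj_apply,
      Pi.smul_apply, smul_eq_mul]
  have hLne : ∀ (q : Pt K) (i : Coord K), i ≠ j → L q i = q i := by
    intro q i hi
    rw [hLapp, Pi.single_eq_of_ne hi, mul_zero, sub_zero]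
  have hFL : ∀ q, F (L q) = F q := by
    intro q
    apply hdep
    · exact hLne q _ (by simp [ix, hj, iv])
    · exact hLne q _ (by simp [iu0, hj, iv])
    · exact hLne q _ (by simp [iu1, hj, iv])
    · intro r' h' hr'
      exact hLne q _ (by simp only [iv, hj, ne_eq, Sum.inr.injEq, Fin.mk.injEq]; omega)
  have e1 : fderiv ℝ F p = fderiv ℝ (F ∘ ⇑L) p := by
    apply Filter.EventuallyEq.fderiv_eq
    exact Filter.Eventually.of_forall fun q => (hFL q).symm
  have e2 : fderiv ℝ (F ∘ ⇑L) p = (fderiv ℝ F (L p)).comp (L : Pt K →L[ℝ] Pt K) := by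
    rw [fderiv_comp p ((hF.differentiable (by simp)) (L p)) L.differentiableAt,
      L.fderiv]
  have e3 : L (Pi.single j 1) = 0 := by
    funext i
    rw [hLapp]
    simp [Pi.single_apply]
  rw [pd, e1, e2]
  simp [e3]


lemma Dop_F_expand (hK : 6 ≤ K) {F : Pt K → ℝ}
    (hhigh : ∀ (r : ℕ) (hr3 : 3 ≤ r) (h : r < K + 1) (p : Pt K), pd (iv K r h) F p = 0)
    (p : Pt K) :
    Dop F F p = pd (ix K) F p + p (iu1 K) * pd (iu0 K) F p + F p * pd (iu1 K) F p
      + p (iv K 1 (by omega)) * pd (iv K 0 (by omega)) F p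
      + p (iv K 2 (by omega)) * pd (iv K 1 (by omega)) F p
      + p (iv K 3 (by omega)) * pd (iv K 2 (by omega)) F p := by
  have h0 : (0:ℕ) < K + 1 := by omega
  have h1 : (1:ℕ) < K + 1 := by omega
  have h2 : (2:ℕ) < K + 1 := by omega
  have h3 : (3:ℕ) < K + 1 := by omega
  unfold Dop
  rw [Fintype.sum_sum_type, Fintype.sum_sum_type, Fintype.sum_sum_type]
  simp only [Fintype.sum_unique]
  have key : ∀ r : Fin (K+1),
      Dvf F p (Sum.inr (Sum.inr (Sum.inr r))) * pd (Sum.inr (Sum.inr (Sum.inr r))) F p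
      = (if r = (⟨0, h0⟩ : Fin (K+1)) then p (iv K 1 h1) * pd (iv K 0 h0) F p else 0)
        + (if r = (⟨1, h1⟩ : Fin (K+1)) then p (iv K 2 h2) * pd (iv K 1 h1) F p else 0)
        + (if r = (⟨2, h2⟩ : Fin (K+1)) then p (iv K 3 h3) * pd (iv K 2 h2) F p else 0) := by
    rintro ⟨r, hr⟩
    match r, hr with
    | 0, hr =>
      have e : Dvf F p (Sum.inr (Sum.inr (Sum.inr ⟨0, hr⟩))) = p (iv K 1 h1) := by
        simp only [Dvf]
        rw [dif_pos (show (0:ℕ)+1 < K+1 by omega)]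
      rw [e, if_pos rfl, if_neg (by intro hcon; simp only [Fin.mk.injEq] at hcon; omega), if_neg (by intro hcon; simp only [Fin.mk.injEq] at hcon; omega),
        add_zero, add_zero]
      rfl
    | 1, hr =>
      have e : Dvf F p (Sum.inr (Sum.inr (Sum.inr ⟨1, hr⟩))) = p (iv K 2 h2) := by
        simp only [Dvf]
        rw [dif_pos (show (1:ℕ)+1 < K+1 by omega)]
      rw [e, if_pos rfl, if_neg (by intro hcon; simp only [Fin.mk.injEq] at hcon; omega), if_neg (by intro hcon; simp only [Fin.mk.injEq] at hcon; omega),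
        add_zero, zero_add]
      rfl
    | 2, hr =>
      have e : Dvf F p (Sum.inr (Sum.inr (Sum.inr ⟨2, hr⟩))) = p (iv K 3 h3) := by
        simp only [Dvf]
        rw [dif_pos (show (2:ℕ)+1 < K+1 by omega)]
      rw [e, if_pos rfl, if_neg (by intro hcon; simp only [Fin.mk.injEq] at hcon; omega), if_neg (by intro hcon; simp only [Fin.mk.injEq] at hcon; omega),
        zero_add, zero_add]
      rfl
    | (n+3), hr =>
      have hz := hhigh (n+3) (by omega) hr p
      simp only [iv] at hz
      rw [hz, mul_zero, if_neg (by intro hcon; simp only [Fin.mk.injEq] at hcon; omega),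
        if_neg (by intro hcon; simp only [Fin.mk.injEq] at hcon; omega),
        if_neg (by intro hcon; simp only [Fin.mk.injEq] at hcon; omega), add_zero, add_zero]
  simp only [key, Finset.sum_add_distrib, Finset.sum_ite_eq', Finset.mem_univ, if_true]
  have hd : (default : Unit) = () := rfl
  simp only [ix, iu0, iu1, iv, hd, Dvf]
  ring



lemma γred_decomp (K : ℕ) (hK : 6 ≤ K) (F : Pt K → ℝ) :
    γred K hK F = fun q c =>
      sform (iu0 K) (fun _ => (1:ℝ)) q c
      + (sform (iv K 0 (by omega)) (fun q => -pd (iv K 2 (by omega)) F q) q c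
      + sform (ix K) (fun q => -q (iu1 K)
          + pd (iv K 2 (by omega)) F q * q (iv K 1 (by omega))) q c) := by
  funext q c
  simp only [γred, α0, βf, sform]
  rcases c with _ | _ | _ | ⟨r, hr⟩
  · simp [ix, iu0, iu1, iv]
  · simp [ix, iu0, iu1, iv]
  · simp [ix, iu0, iu1, iv]
  · simp only [ix, iu0, iu1, iv, Sum.inr.injEq, Fin.mk.injEq, reduceCtorEq,
      if_false, Sum.inl.injEq]
    split_ifs <;> first | contradiction | omega | ring1

lemma βred_decomp (K : ℕ) (hK : 6 ≤ K) (F : Pt K → ℝ) :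
    βred K hK F = fun q c =>
      sform (iu1 K) (fun _ => (1:ℝ)) q c
      + (sform (iv K 1 (by omega)) (fun q => -pd (iv K 2 (by omega)) F q) q c
      + (sform (iv K 0 (by omega)) (fun q => -Acoef K hK F q) q c
      + sform (ix K) (fun q => -F q
          + pd (iv K 2 (by omega)) F q * q (iv K 2 (by omega))
          + Acoef K hK F q * q (iv K 1 (by omega))) q c)) := by
  funext q c
  simp only [βred, αred, α1, βf, sform]
  rcases c with _ | _ | _ | ⟨r, hr⟩
  · simp [ix, iu0, iu1, iv]
  · simp [ix, iu0, iu1, iv]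
  · simp [ix, iu0, iu1, iv]
  · simp only [ix, iu0, iu1, iv, Sum.inr.injEq, Fin.mk.injEq, reduceCtorEq,
      if_false, Sum.inl.injEq]
    split_ifs <;> first | contradiction | omega | ring1

end Aux

/-- Second and third reduction steps of Section 3.2:
`L_D β = F_{u₀}γ + F_{u₁}β + Bβ₀` and `L_D γ = β + Cβ₀`. -/
theorem lieD_beta_gamma (K : ℕ) (hK : 6 ≤ K) (F : Pt K → ℝ)
    (hF : ContDiff ℝ (⊤ : ℕ∞) F)
    (hdep : ∀ p q : Pt K, p (ix K) = q (ix K) → p (iu0 K) = q (iu0 K) →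
      p (iu1 K) = q (iu1 K) →
      (∀ (r : ℕ) (h : r < K + 1), r ≤ 2 → p (iv K r h) = q (iv K r h)) →
      F p = F q) :
    (∀ (p : Pt K) (c : Coord K),
      lieD (Dvf F) (βred K hK F) p c =
        pd (iu0 K) F p * γred K hK F p c
        + pd (iu1 K) F p * βred K hK F p c
        + Bcoef K hK F p * βf K 0 (by omega) p c)
    ∧ ∀ (p : Pt K) (c : Coord K),
      lieD (Dvf F) (γred K hK F) p c =
        βred K hK F p c + Ccoef K hK F p * βf K 0 (by omega) p c := by
  have h0 : (0:ℕ) < K + 1 := by omega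
  have h1 : (1:ℕ) < K + 1 := by omega
  have h2 : (2:ℕ) < K + 1 := by omega
  have h3 : (3:ℕ) < K + 1 := by omega
  have hhigh : ∀ (r : ℕ), 3 ≤ r → ∀ (h : r < K + 1) (p : Pt K), pd (iv K r h) F p = 0 :=
    fun r hr3 h p => pd_high hK hF hdep hr3 h p
  have hFv2 : ContDiff ℝ (⊤ : ℕ∞) (pd (iv K 2 h2) F) := contDiff_pd hF _
  have hA : ContDiff ℝ (⊤ : ℕ∞) (Acoef K hK F) := by
    unfold Acoef
    exact ((contDiff_pd hF _).add ((contDiff_pd hF _).mul (contDiff_pd hF _))).sub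
      (contDiff_Dop hF (contDiff_pd hF _))
  have sumDop : ∀ (f : Pt K → ℝ) (p : Pt K),
      (∑ b : Coord K, Dvf F p b * pd b f p) = Dop F f p := fun _ _ => rfl
  have Dvf_v1 : ∀ p : Pt K, Dvf F p (iv K 1 h1) = p (iv K 2 h2) := by
    intro p; simp only [Dvf, iv]; rw [dif_pos (show (1:ℕ)+1 < K+1 by omega)]
  have Dvf_v2 : ∀ p : Pt K, Dvf F p (iv K 2 h2) = p (iv K 3 h3) := by
    intro p; simp only [Dvf, iv]; rw [dif_pos (show (2:ℕ)+1 < K+1 by omega)]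
  have pdD_x : ∀ (c : Coord K) (p : Pt K), pd c (fun q => Dvf F q (ix K)) p = 0 :=
    fun c p => pd_const c 1 p
  have pdD_u0 : ∀ (c : Coord K) (p : Pt K),
      pd c (fun q => Dvf F q (iu0 K)) p = if iu1 K = c then 1 else 0 :=
    fun c p => pd_coord c (iu1 K) p
  have pdD_u1 : ∀ (c : Coord K) (p : Pt K),
      pd c (fun q => Dvf F q (iu1 K)) p = pd c F p := fun c p => rfl
  have pdD_v0 : ∀ (c : Coord K) (p : Pt K),
      pd c (fun q => Dvf F q (iv K 0 h0)) p = if iv K 1 h1 = c then 1 else 0 := by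
    intro c p
    have e : (fun q : Pt K => Dvf F q (iv K 0 h0)) = fun q => q (iv K 1 h1) := by
      funext q; simp only [Dvf, iv]; rw [dif_pos (show (0:ℕ)+1 < K+1 by omega)]
    rw [e, pd_coord]
  have pdD_v1 : ∀ (c : Coord K) (p : Pt K),
      pd c (fun q => Dvf F q (iv K 1 h1)) p = if iv K 2 h2 = c then 1 else 0 := by
    intro c p
    have e : (fun q : Pt K => Dvf F q (iv K 1 h1)) = fun q => q (iv K 2 h2) := by
      funext q; simp only [Dvf, iv]; rw [dif_pos (show (1:ℕ)+1 < K+1 by omega)]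
    rw [e, pd_coord]
  constructor
  · -- β identity
    intro p c
    rw [βred_decomp K hK F]
    rw [lieD_four (Dvf F) (iu1 K) (iv K 1 h1) (iv K 0 h0) (ix K)
      (fun _ => (1:ℝ)) (fun q => -pd (iv K 2 h2) F q) (fun q => -Acoef K hK F q)
      (fun q => -F q + pd (iv K 2 h2) F q * q (iv K 2 h2)
        + Acoef K hK F q * q (iv K 1 h1))
      contDiff_const hFv2.neg hA.neg
      ((hF.neg.add (hFv2.mul (contDiff_coord _))).add (hA.mul (contDiff_coord _))) p c]
    simp only [sumDop]
    have eDopgx : Dop F (fun q => -F q + pd (iv K 2 h2) F q * q (iv K 2 h2)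
          + Acoef K hK F q * q (iv K 1 h1)) p
        = -Dop F F p + (Dop F (pd (iv K 2 h2) F) p * p (iv K 2 h2)
            + pd (iv K 2 h2) F p * p (iv K 3 h3))
          + (Dop F (Acoef K hK F) p * p (iv K 1 h1)
            + Acoef K hK F p * p (iv K 2 h2)) := by
      rw [Dop_add (hF.neg.add (hFv2.mul (contDiff_coord _))) (hA.mul (contDiff_coord _)) p,
        Dop_add hF.neg (hFv2.mul (contDiff_coord _)) p,
        Dop_neg, Dop_mul hFv2 (contDiff_coord _) p, Dop_mul hA (contDiff_coord _) p,
        Dop_coord, Dop_coord, Dvf_v1, Dvf_v2]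
    rw [eDopgx, Dop_F_expand hK hhigh p, Dop_const, Dop_neg, Dop_neg,
      pdD_u1, pdD_v0, pdD_v1, pdD_x]
    simp only [βred_decomp K hK F, γred_decomp K hK F, sform, βf, Bcoef, Acoef, Ccoef]
    rcases c with _ | _ | _ | ⟨r, hr⟩
    · simp only [ix, iu0, iu1, iv, Sum.inr.injEq, Fin.mk.injEq, reduceCtorEq,
        if_false, if_true, Sum.inl.injEq]
      ring
    · simp only [ix, iu0, iu1, iv, Sum.inr.injEq, Fin.mk.injEq, reduceCtorEq,
        if_false, if_true, Sum.inl.injEq]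
      ring
    · simp only [ix, iu0, iu1, iv, Sum.inr.injEq, Fin.mk.injEq, reduceCtorEq,
        if_false, if_true, Sum.inl.injEq]
      ring
    · simp only [ix, iu0, iu1, iv, Sum.inr.injEq, Fin.mk.injEq, reduceCtorEq,
        if_false, if_true, Sum.inl.injEq]
      match r, hr with
      | 0, hr => split_ifs <;> first | contradiction | omega | ring1
      | 1, hr => split_ifs <;> first | contradiction | omega | ring1
      | 2, hr => split_ifs <;> first | contradiction | omega | ring1
      | (n+3), hr =>
        have hz := hhigh (n+3) (by omega) hr p
        simp only [iv] at hz
        split_ifs <;> first | contradiction | omega | (rw [hz]; ring1) | ring1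
  · -- γ identity
    intro p c
    rw [γred_decomp K hK F]
    rw [lieD_three (Dvf F) (iu0 K) (iv K 0 h0) (ix K)
      (fun _ => (1:ℝ)) (fun q => -pd (iv K 2 h2) F q)
      (fun q => -q (iu1 K) + pd (iv K 2 h2) F q * q (iv K 1 h1))
      contDiff_const hFv2.neg
      ((contDiff_coord _).neg.add (hFv2.mul (contDiff_coord _))) p c]
    simp only [sumDop]
    have eDopgx : Dop F (fun q => -q (iu1 K) + pd (iv K 2 h2) F q * q (iv K 1 h1)) p
        = -F p + (Dop F (pd (iv K 2 h2) F) p * p (iv K 1 h1)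
            + pd (iv K 2 h2) F p * p (iv K 2 h2)) := by
      rw [Dop_add (contDiff_coord _).neg (hFv2.mul (contDiff_coord _)) p,
        Dop_neg, Dop_mul hFv2 (contDiff_coord _) p, Dop_coord, Dop_coord, Dvf_v1]
      rfl
    rw [eDopgx, Dop_const, Dop_neg, pdD_u0, pdD_v0, pdD_x]
    simp only [βred_decomp K hK F, sform, βf, Ccoef, Acoef]
    rcases c with _ | _ | _ | ⟨r, hr⟩
    · simp only [ix, iu0, iu1, iv, Sum.inr.injEq, Fin.mk.injEq, reduceCtorEq,
        if_false, if_true, Sum.inl.injEq]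
      ring
    · simp only [ix, iu0, iu1, iv, Sum.inr.injEq, Fin.mk.injEq, reduceCtorEq,
        if_false, if_true, Sum.inl.injEq]
      ring
    · simp only [ix, iu0, iu1, iv, Sum.inr.injEq, Fin.mk.injEq, reduceCtorEq,
        if_false, if_true, Sum.inl.injEq]
      ring
    · simp only [ix, iu0, iu1, iv, Sum.inr.injEq, Fin.mk.injEq, reduceCtorEq,
        if_false, if_true, Sum.inl.injEq]
      split_ifs <;> first | contradiction | omega | ring1
end
end

section
/- Fix N ≥ 7 and λ ∈ ℝ, and work on ℝ^{N+3} with coordinates (v, v₁, q₀, q₁, …, q_N). Define 𝒟f = Σ_{r<N} q_{r+1}∂f/∂q_r and Df = v₁∂f/∂v − (λ+q₀)v·∂f/∂v₁ + 𝒟f on smooth functions. Let A, B, C, Q be smooth functions depending only on (q₀, …, q_{N−4}), and set P := A·v + B·v₁ + C. Then the identity D(DP) + (λ+q₀)P = −Q·v holds on all of ℝ^{N+3} if and only if the following three equations hold: 2𝒟A + 𝒟²B = 0, 𝒟²C + (λ+q₀)C = 0, and Q = −𝒟²A + q₁B + 2(λ+q₀)𝒟B. In particular, if 2𝒟A + 𝒟²B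 = 0 and C = 0, then D(DP) + (λ+q₀)P = −(½𝒟³B + 2(λ+q₀)𝒟B + q₁B)·v. -/
/-!
Section 6.5: isospectral evolutions of the eigenvalue problem
`v_xx + (λ + q)v = 0`.  The space is `ℝ^{N+3}` with coordinates
`(v, v₁, q₀, q₁, …, q_N)`.
-/

noncomputable section

open scoped BigOperators

/-- Index set of the coordinates `v, v₁, q₀, …, q_N` of `ℝ^{N+3}`. -/
abbrev SCoord (N : ℕ) := Unit ⊕ Unit ⊕ Fin (N + 1)

/-- A point of `ℝ^{N+3}`. -/
abbrev SPt (N : ℕ) := SCoord N → ℝ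

/-- The coordinate `v`. -/
def sv (N : ℕ) : SCoord N := Sum.inl ()
/-- The coordinate `v₁` (representing `v_x`). -/
def sv1 (N : ℕ) : SCoord N := Sum.inr (Sum.inl ())
/-- The coordinate `q_r` (representing `∂ʳq/∂xʳ`). -/
def sqc (N r : ℕ) (h : r < N + 1) : SCoord N := Sum.inr (Sum.inr ⟨r, h⟩)

/-- The partial derivative `∂f/∂(coordinate i)` at a point. -/
def spd {N : ℕ} (i : SCoord N) (f : SPt N → ℝ) (p : SPt N) : ℝ :=
  fderiv ℝ f p (Pi.single i 1)

/-- The truncated total derivative on the `q`-variables: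
`𝒟f = Σ_{r<N} q_{r+1} ∂f/∂q_r`. -/
def 𝒟 {N : ℕ} (f : SPt N → ℝ) : SPt N → ℝ := fun p =>
  ∑ r : Fin (N + 1),
    (if h : (r : ℕ) + 1 < N + 1 then p (sqc N ((r : ℕ) + 1) h) else 0)
      * spd (sqc N r r.isLt) f p

/-- The total derivative `Df = v₁∂f/∂v - (λ+q₀)v·∂f/∂v₁ + 𝒟f`. -/
def Dtot {N : ℕ} (lam : ℝ) (f : SPt N → ℝ) : SPt N → ℝ := fun p =>
  p (sv1 N) * spd (sv N) f p
    - (lam + p (sqc N 0 (Nat.succ_pos N))) * p (sv N) * spd (sv1 N) f p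
    + 𝒟 f p


section SpectralHelpers

variable {N : ℕ}

lemma sqc_ne_sv (r : ℕ) (h : r < N + 1) : sqc N r h ≠ sv N := by simp [sqc, sv]

lemma sqc_ne_sv1 (r : ℕ) (h : r < N + 1) : sqc N r h ≠ sv1 N := by simp [sqc, sv1]

lemma sv_ne_sv1 : sv N ≠ sv1 N := by simp [sv, sv1]

lemma sqc_inj {r r' : ℕ} {h : r < N + 1} {h' : r' < N + 1} :
    sqc N r h = sqc N r' h' ↔ r = r' := by
  simp [sqc, Fin.ext_iff]

/-- Dependence only on the coordinates `q₀, …, q_M`. -/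
def QDep (N M : ℕ) (F : SPt N → ℝ) : Prop :=
  ∀ p q : SPt N,
    (∀ (r : ℕ) (h : r < N + 1), r ≤ M → p (sqc N r h) = q (sqc N r h)) → F p = F q

lemma QDep.mono {M M' : ℕ} (h : M ≤ M') {F : SPt N → ℝ} (hF : QDep N M F) :
    QDep N M' F :=
  fun p q hpq => hF p q (fun r hr hrM => hpq r hr (hrM.trans h))

lemma qdep_op2 {M : ℕ} {f g : SPt N → ℝ} (op : ℝ → ℝ → ℝ)
    (hf : QDep N M f) (hg : QDep N M g) : QDep N M (fun p => op (f p) (g p)) :=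
  fun p q h => by show op (f p) (g p) = op (f q) (g q); rw [hf p q h, hg p q h]

lemma qdep_const {M : ℕ} (c : ℝ) : QDep N M (fun _ => c) := fun _ _ _ => rfl

lemma qdep_coord {M r : ℕ} (h : r < N + 1) (hr : r ≤ M) :
    QDep N M (fun p => p (sqc N r h)) := fun _ _ hpq => hpq r h hr

lemma differentiableAt_coord (i : SCoord N) (p : SPt N) :
    DifferentiableAt ℝ (fun q : SPt N => q i) p :=
  (ContinuousLinearMap.proj (R := ℝ) (φ := fun _ : SCoord N => ℝ) i).differentiableAt

lemma contDiff_coord_s9 (i : SCoord N) :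
    ContDiff ℝ (⊤ : ℕ∞) (fun q : SPt N => q i) :=
  (ContinuousLinearMap.proj (R := ℝ) (φ := fun _ : SCoord N => ℝ) i).contDiff

lemma spd_as_deriv {i : SCoord N} {f : SPt N → ℝ} {p : SPt N}
    (hf : DifferentiableAt ℝ f p) :
    spd i f p = deriv (fun t : ℝ => f (p + t • (Pi.single i 1 : SPt N))) 0 := by
  have hline : HasDerivAt (fun t : ℝ => p + t • (Pi.single i 1 : SPt N)) ((Pi.single i 1 : SPt N)) 0 := by
    simpa using ((hasDerivAt_id (0 : ℝ)).smul_const ((Pi.single i 1 : SPt N))).const_add p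
  have h1 : HasFDerivAt f (fderiv ℝ f p) ((fun t : ℝ => p + t • (Pi.single i 1 : SPt N)) 0) := by
    simpa using hf.hasFDerivAt
  have hcomp := h1.comp_hasDerivAt 0 hline
  have : deriv (fun t : ℝ => f (p + t • (Pi.single i 1 : SPt N))) 0
      = fderiv ℝ f p ((Pi.single i 1 : SPt N)) := by
    exact hcomp.deriv
  rw [this]; rfl

lemma spd_eq_zero_of_line {i : SCoord N} {f : SPt N → ℝ} {p : SPt N}
    (hf : DifferentiableAt ℝ f p)
    (hc : ∀ t : ℝ, f (p + t • (Pi.single i 1 : SPt N)) = f p) : spd i f p = 0 := by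
  rw [spd_as_deriv hf]
  have : (fun t : ℝ => f (p + t • (Pi.single i 1 : SPt N))) = fun _ => f p := funext hc
  rw [this, deriv_const]

lemma spd_zero_of_qdep {M : ℕ} {F : SPt N → ℝ} (hdep : QDep N M F)
    (hF : Differentiable ℝ F) {i : SCoord N}
    (hi : ∀ (r : ℕ) (h : r < N + 1), r ≤ M → sqc N r h ≠ i) (p : SPt N) :
    spd i F p = 0 := by
  apply spd_eq_zero_of_line (hF p)
  intro t
  apply hdep
  intro r h hr
  simp [Pi.single_apply, hi r h hr]

lemma qdep_spd {M : ℕ} {F : SPt N → ℝ} (hdep : QDep N M F)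
    (hF : Differentiable ℝ F) (i : SCoord N) :
    QDep N M (spd i F) := by
  intro p q hpq
  rw [spd_as_deriv (hF p), spd_as_deriv (hF q)]
  congr 1
  funext t
  apply hdep
  intro r h hr
  simp [hpq r h hr]

lemma spd_add {i : SCoord N} {f g : SPt N → ℝ} {p : SPt N}
    (hf : DifferentiableAt ℝ f p) (hg : DifferentiableAt ℝ g p) :
    spd i (fun q => f q + g q) p = spd i f p + spd i g p := by
  unfold spd; rw [fderiv_fun_add hf hg]; simp

lemma spd_mul {i : SCoord N} {f g : SPt N → ℝ} {p : SPt N}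
    (hf : DifferentiableAt ℝ f p) (hg : DifferentiableAt ℝ g p) :
    spd i (fun q => f q * g q) p = f p * spd i g p + g p * spd i f p := by
  unfold spd; rw [fderiv_fun_mul hf hg]; simp

lemma spd_const_mul {i : SCoord N} {f : SPt N → ℝ} {p : SPt N}
    (hf : DifferentiableAt ℝ f p) (c : ℝ) :
    spd i (fun q => c * f q) p = c * spd i f p := by
  unfold spd; rw [fderiv_const_mul hf c]; simp

lemma spd_const {i : SCoord N} {p : SPt N} (c : ℝ) :
    spd i (fun _ : SPt N => c) p = 0 := by
  unfold spd; simp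

lemma spd_eval (i j : SCoord N) (p : SPt N) :
    spd i (fun q : SPt N => q j) p = if j = i then 1 else 0 := by
  unfold spd
  have h : (fun q : SPt N => q j)
      = ⇑(ContinuousLinearMap.proj (R := ℝ) (φ := fun _ : SCoord N => ℝ) j) := rfl
  rw [h, ContinuousLinearMap.fderiv]
  simp [Pi.single_apply]

lemma contDiff_spd {F : SPt N → ℝ} (hF : ContDiff ℝ (⊤ : ℕ∞) F) (i : SCoord N) :
    ContDiff ℝ (⊤ : ℕ∞) (spd i F) :=
  (hF.fderiv_right (by simp)).clm_apply contDiff_const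

lemma contDiff_𝒟 {F : SPt N → ℝ} (hF : ContDiff ℝ (⊤ : ℕ∞) F) : ContDiff ℝ (⊤ : ℕ∞) (𝒟 F) := by
  unfold 𝒟
  apply ContDiff.sum
  intro r _
  by_cases h : (r : ℕ) + 1 < N + 1
  · simp only [dif_pos h]
    exact (contDiff_coord_s9 _).mul (contDiff_spd hF _)
  · simp only [dif_neg h]
    exact contDiff_const.mul (contDiff_spd hF _)

end SpectralHelpers
section SpectralHelpers2

variable {N : ℕ}

lemma qdep_𝒟 {M : ℕ} {F : SPt N → ℝ} (hdep : QDep N M F)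
    (hF : Differentiable ℝ F) : QDep N (M + 1) (𝒟 F) := by
  intro p q hpq
  unfold 𝒟
  apply Finset.sum_congr rfl
  intro r _
  by_cases hr : (r : ℕ) ≤ M
  · have h1 : spd (sqc N r r.isLt) F p = spd (sqc N r r.isLt) F q :=
      qdep_spd hdep hF _ p q (fun r' h' hr' => hpq r' h' (by omega))
    rw [h1]
    congr 1
    split_ifs with h
    · exact hpq _ _ (by omega)
    · rfl
  · have hz : ∀ x : SPt N, spd (sqc N r r.isLt) F x = 0 :=
      spd_zero_of_qdep hdep hF (fun r' h' hr' => by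
        simp only [ne_eq, sqc_inj]; omega)
    rw [hz p, hz q, mul_zero, mul_zero]

lemma 𝒟_add {f g : SPt N → ℝ} (hf : Differentiable ℝ f) (hg : Differentiable ℝ g)
    (p : SPt N) : 𝒟 (fun q => f q + g q) p = 𝒟 f p + 𝒟 g p := by
  unfold 𝒟
  rw [← Finset.sum_add_distrib]
  apply Finset.sum_congr rfl
  intro r _
  rw [spd_add (hf p) (hg p)]
  ring

lemma 𝒟_sub {f g : SPt N → ℝ} (hf : Differentiable ℝ f) (hg : Differentiable ℝ g)
    (p : SPt N) : 𝒟 (fun q => f q - g q) p = 𝒟 f p - 𝒟 g p := by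
  unfold 𝒟
  rw [← Finset.sum_sub_distrib]
  apply Finset.sum_congr rfl
  intro r _
  have : spd (sqc N r r.isLt) (fun q => f q - g q) p
      = spd (sqc N r r.isLt) f p - spd (sqc N r r.isLt) g p := by
    unfold spd; rw [fderiv_fun_sub (hf p) (hg p)]; simp
  rw [this]
  ring

lemma 𝒟_mul {f g : SPt N → ℝ} (hf : Differentiable ℝ f) (hg : Differentiable ℝ g)
    (p : SPt N) : 𝒟 (fun q => f q * g q) p = f p * 𝒟 g p + g p * 𝒟 f p := by
  unfold 𝒟
  rw [Finset.mul_sum, Finset.mul_sum, ← Finset.sum_add_distrib]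
  apply Finset.sum_congr rfl
  intro r _
  rw [spd_mul (hf p) (hg p)]
  ring

lemma 𝒟_const_mul {f : SPt N → ℝ} (hf : Differentiable ℝ f) (c : ℝ)
    (p : SPt N) : 𝒟 (fun q => c * f q) p = c * 𝒟 f p := by
  unfold 𝒟
  rw [Finset.mul_sum]
  apply Finset.sum_congr rfl
  intro r _
  rw [spd_const_mul (hf p) c]
  ring

lemma 𝒟_zero (p : SPt N) : 𝒟 (fun _ : SPt N => (0 : ℝ)) p = 0 := by
  unfold 𝒟
  apply Finset.sum_eq_zero
  intro r _
  rw [spd_const, mul_zero]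

lemma 𝒟_const_add {f : SPt N → ℝ} (hf : Differentiable ℝ f) (c : ℝ)
    (p : SPt N) : 𝒟 (fun q => c + f q) p = 𝒟 f p := by
  have h := 𝒟_add (f := fun _ => c) (g := f) (differentiable_const c) hf p
  have hc : 𝒟 (fun _ : SPt N => c) p = 0 := by
    unfold 𝒟
    apply Finset.sum_eq_zero
    intro r _
    rw [spd_const, mul_zero]
  rw [h, hc, zero_add]

lemma 𝒟_q0 (hN : 1 ≤ N) (p : SPt N) :
    𝒟 (fun q : SPt N => q (sqc N 0 (Nat.succ_pos N))) p
      = p (sqc N 1 (by omega)) := by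
  unfold 𝒟
  rw [Finset.sum_eq_single_of_mem (⟨0, Nat.succ_pos N⟩ : Fin (N + 1))
    (Finset.mem_univ _)]
  · have hv : ((⟨0, Nat.succ_pos N⟩ : Fin (N + 1)) : ℕ) = 0 := rfl
    simp only [hv]
    rw [dif_pos (by omega : (0 : ℕ) + 1 < N + 1), spd_eval, if_pos rfl, mul_one]
  · intro r _ hr
    rw [spd_eval, if_neg, mul_zero]
    intro h0
    exact hr (Fin.ext (by simpa using (sqc_inj.mp h0).symm))

end SpectralHelpers2
section SpectralHelpers3

variable {N : ℕ}

lemma spd_affine {M : ℕ} (lam : ℝ) (A B C : SPt N → ℝ)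
    (hA : ContDiff ℝ (⊤ : ℕ∞) A) (hB : ContDiff ℝ (⊤ : ℕ∞) B) (hC : ContDiff ℝ (⊤ : ℕ∞) C)
    (p : SPt N) (i : SCoord N) :
    spd i (fun q => A q * q (sv N) + B q * q (sv1 N) + C q) p
      = p (sv N) * spd i A p + p (sv1 N) * spd i B p + spd i C p
        + A p * (if sv N = i then 1 else 0)
        + B p * (if sv1 N = i then 1 else 0) := by
  have dA : DifferentiableAt ℝ A p := hA.differentiable (by simp) p
  have dB : DifferentiableAt ℝ B p := hB.differentiable (by simp) p
  have dC : DifferentiableAt ℝ C p := hC.differentiable (by simp) p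
  have dev : DifferentiableAt ℝ (fun q : SPt N => q (sv N)) p :=
    differentiableAt_coord _ p
  have dev1 : DifferentiableAt ℝ (fun q : SPt N => q (sv1 N)) p :=
    differentiableAt_coord _ p
  have e1 : spd i (fun q => A q * q (sv N) + B q * q (sv1 N) + C q) p
      = spd i (fun q => A q * q (sv N) + B q * q (sv1 N)) p + spd i C p :=
    spd_add ((dA.mul dev).add (dB.mul dev1)) dC
  have e2 : spd i (fun q => A q * q (sv N) + B q * q (sv1 N)) p
      = spd i (fun q => A q * q (sv N)) p + spd i (fun q => B q * q (sv1 N)) p :=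
    spd_add (dA.mul dev) (dB.mul dev1)
  have e3 : spd i (fun q => A q * q (sv N)) p
      = A p * spd i (fun q : SPt N => q (sv N)) p + p (sv N) * spd i A p :=
    spd_mul dA dev
  have e4 : spd i (fun q => B q * q (sv1 N)) p
      = B p * spd i (fun q : SPt N => q (sv1 N)) p + p (sv1 N) * spd i B p :=
    spd_mul dB dev1
  rw [e1, e2, e3, e4, spd_eval, spd_eval]
  ring

lemma Dtot_affine {M : ℕ} (lam : ℝ) (A B C : SPt N → ℝ)
    (hA : ContDiff ℝ (⊤ : ℕ∞) A) (hB : ContDiff ℝ (⊤ : ℕ∞) B) (hC : ContDiff ℝ (⊤ : ℕ∞) C)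
    (hAd : QDep N M A) (hBd : QDep N M B) (hCd : QDep N M C) :
    Dtot lam (fun q => A q * q (sv N) + B q * q (sv1 N) + C q)
      = fun p => (𝒟 A p - (lam + p (sqc N 0 (Nat.succ_pos N))) * B p) * p (sv N)
          + (A p + 𝒟 B p) * p (sv1 N) + 𝒟 C p := by
  have dA : Differentiable ℝ A := hA.differentiable (by simp)
  have dB : Differentiable ℝ B := hB.differentiable (by simp)
  have dC : Differentiable ℝ C := hC.differentiable (by simp)
  have hAsv : ∀ x, spd (sv N) A x = 0 :=
    spd_zero_of_qdep hAd dA (fun r h _ => sqc_ne_sv r h)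
  have hBsv : ∀ x, spd (sv N) B x = 0 :=
    spd_zero_of_qdep hBd dB (fun r h _ => sqc_ne_sv r h)
  have hCsv : ∀ x, spd (sv N) C x = 0 :=
    spd_zero_of_qdep hCd dC (fun r h _ => sqc_ne_sv r h)
  have hAsv1 : ∀ x, spd (sv1 N) A x = 0 :=
    spd_zero_of_qdep hAd dA (fun r h _ => sqc_ne_sv1 r h)
  have hBsv1 : ∀ x, spd (sv1 N) B x = 0 :=
    spd_zero_of_qdep hBd dB (fun r h _ => sqc_ne_sv1 r h)
  have hCsv1 : ∀ x, spd (sv1 N) C x = 0 :=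
    spd_zero_of_qdep hCd dC (fun r h _ => sqc_ne_sv1 r h)
  funext p
  have hsv : spd (sv N) (fun q => A q * q (sv N) + B q * q (sv1 N) + C q) p = A p := by
    rw [spd_affine (M := M) lam A B C hA hB hC p (sv N)]
    rw [hAsv p, hBsv p, hCsv p, if_pos rfl, if_neg (Ne.symm sv_ne_sv1)]
    ring
  have hsv1 : spd (sv1 N) (fun q => A q * q (sv N) + B q * q (sv1 N) + C q) p = B p := by
    rw [spd_affine (M := M) lam A B C hA hB hC p (sv1 N)]
    rw [hAsv1 p, hBsv1 p, hCsv1 p, if_neg sv_ne_sv1, if_pos rfl]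
    ring
  have hDP : 𝒟 (fun q => A q * q (sv N) + B q * q (sv1 N) + C q) p
      = p (sv N) * 𝒟 A p + p (sv1 N) * 𝒟 B p + 𝒟 C p := by
    unfold 𝒟
    rw [Finset.mul_sum, Finset.mul_sum, ← Finset.sum_add_distrib,
      ← Finset.sum_add_distrib]
    apply Finset.sum_congr rfl
    intro r _
    rw [spd_affine (M := M) lam A B C hA hB hC p (sqc N r r.isLt)]
    rw [if_neg (Ne.symm (sqc_ne_sv r r.isLt)), if_neg (Ne.symm (sqc_ne_sv1 r r.isLt))]
    ring
  show Dtot lam _ p = _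
  unfold Dtot
  rw [hsv, hsv1, hDP]
  ring

end SpectralHelpers3
section SpectralHelpers4

variable {N : ℕ}

lemma key_identity {M : ℕ} (hN : 1 ≤ N) (lam : ℝ) (A B C : SPt N → ℝ)
    (hA : ContDiff ℝ (⊤ : ℕ∞) A) (hB : ContDiff ℝ (⊤ : ℕ∞) B) (hC : ContDiff ℝ (⊤ : ℕ∞) C)
    (hAd : QDep N M A) (hBd : QDep N M B) (hCd : QDep N M C) (p : SPt N) :
    Dtot lam (Dtot lam (fun q => A q * q (sv N) + B q * q (sv1 N) + C q)) p
      + (lam + p (sqc N 0 (Nat.succ_pos N)))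
        * (A p * p (sv N) + B p * p (sv1 N) + C p)
    = (𝒟 (𝒟 A) p - p (sqc N 1 (by omega)) * B p
        - 2 * (lam + p (sqc N 0 (Nat.succ_pos N))) * 𝒟 B p) * p (sv N)
      + (2 * 𝒟 A p + 𝒟 (𝒟 B) p) * p (sv1 N)
      + (𝒟 (𝒟 C) p + (lam + p (sqc N 0 (Nat.succ_pos N))) * C p) := by
  have dA : Differentiable ℝ A := hA.differentiable (by simp)
  have dB : Differentiable ℝ B := hB.differentiable (by simp)
  have hq0cd : ContDiff ℝ (⊤ : ℕ∞) (fun q : SPt N => lam + q (sqc N 0 (Nat.succ_pos N))) :=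
    contDiff_const.add (contDiff_coord_s9 _)
  have hA' : ContDiff ℝ (⊤ : ℕ∞)
      (fun q : SPt N => 𝒟 A q - (lam + q (sqc N 0 (Nat.succ_pos N))) * B q) :=
    (contDiff_𝒟 hA).sub (hq0cd.mul hB)
  have hB' : ContDiff ℝ (⊤ : ℕ∞) (fun q : SPt N => A q + 𝒟 B q) :=
    hA.add (contDiff_𝒟 hB)
  have hC' : ContDiff ℝ (⊤ : ℕ∞) (𝒟 C) := contDiff_𝒟 hC
  have hA'd : QDep N (M + 1)
      (fun q : SPt N => 𝒟 A q - (lam + q (sqc N 0 (Nat.succ_pos N))) * B q) :=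
    qdep_op2 (fun a b => a - b) (qdep_𝒟 hAd dA)
      (qdep_op2 (fun a b => a * b)
        (qdep_op2 (fun a b => a + b) (qdep_const lam)
          (qdep_coord (Nat.succ_pos N) (Nat.zero_le _)))
        (hBd.mono (Nat.le_succ M)))
  have hB'd : QDep N (M + 1) (fun q : SPt N => A q + 𝒟 B q) :=
    qdep_op2 (fun a b => a + b) (hAd.mono (Nat.le_succ M)) (qdep_𝒟 hBd dB)
  have hC'd : QDep N (M + 1) (𝒟 C) := qdep_𝒟 hCd (hC.differentiable (by simp))
  rw [Dtot_affine (M := M) lam A B C hA hB hC hAd hBd hCd]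
  rw [Dtot_affine (M := M + 1) lam
    (fun q : SPt N => 𝒟 A q - (lam + q (sqc N 0 (Nat.succ_pos N))) * B q)
    (fun q : SPt N => A q + 𝒟 B q) (𝒟 C) hA' hB' hC' hA'd hB'd hC'd]
  have hq0 : 𝒟 (fun q : SPt N => lam + q (sqc N 0 (Nat.succ_pos N))) p
      = p (sqc N 1 (by omega)) := by
    rw [𝒟_const_add (differentiableAt_coord _ : Differentiable ℝ _) lam p]
    · exact 𝒟_q0 hN p
  have hDA' : 𝒟 (fun q : SPt N =>
        𝒟 A q - (lam + q (sqc N 0 (Nat.succ_pos N))) * B q) p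
      = 𝒟 (𝒟 A) p - (p (sqc N 1 (by omega)) * B p
          + (lam + p (sqc N 0 (Nat.succ_pos N))) * 𝒟 B p) := by
    rw [𝒟_sub ((contDiff_𝒟 hA).differentiable (by simp))
        ((hq0cd.mul hB).differentiable (by simp)) p]
    have := 𝒟_mul (f := fun q : SPt N => lam + q (sqc N 0 (Nat.succ_pos N)))
      (g := B) (hq0cd.differentiable (by simp)) dB p
    rw [this, hq0]
    ring
  have hDB' : 𝒟 (fun q : SPt N => A q + 𝒟 B q) p = 𝒟 A p + 𝒟 (𝒟 B) p :=
    𝒟_add dA ((contDiff_𝒟 hB).differentiable (by simp)) p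
  beta_reduce
  rw [hDA', hDB']
  ring

end SpectralHelpers4
section SpectralHelpers5

variable {N : ℕ}

lemma qdep_update_inv {M : ℕ} {F : SPt N → ℝ} (hF : QDep N M F)
    (p : SPt N) (t s : ℝ) :
    F (Function.update (Function.update p (sv N) t) (sv1 N) s) = F p := by
  apply hF
  intro r h hr
  rw [Function.update_of_ne (sqc_ne_sv1 r h), Function.update_of_ne (sqc_ne_sv r h)]

lemma separate {α β γ : SPt N → ℝ}
    (hα : ∀ (p : SPt N) (t s : ℝ),
      α (Function.update (Function.update p (sv N) t) (sv1 N) s) = α p)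
    (hβ : ∀ (p : SPt N) (t s : ℝ),
      β (Function.update (Function.update p (sv N) t) (sv1 N) s) = β p)
    (hγ : ∀ (p : SPt N) (t s : ℝ),
      γ (Function.update (Function.update p (sv N) t) (sv1 N) s) = γ p)
    (h : ∀ p : SPt N, α p * p (sv N) + β p * p (sv1 N) + γ p = 0) (p : SPt N) :
    α p = 0 ∧ β p = 0 ∧ γ p = 0 := by
  have ev : ∀ t s : ℝ, α p * t + β p * s + γ p = 0 := by
    intro t s
    have hh := h (Function.update (Function.update p (sv N) t) (sv1 N) s)
    rw [hα, hβ, hγ] at hh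
    rw [Function.update_of_ne sv_ne_sv1, Function.update_self,
      Function.update_self] at hh
    exact hh
  have h00 := ev 0 0
  have h10 := ev 1 0
  have h01 := ev 0 1
  refine ⟨by linarith, by linarith, by linarith⟩

end SpectralHelpers5

/-- Section 6.5: for `P = A·v + B·v₁ + C` with `A, B, C, Q` depending only on
`q₀, …, q_{N-4}`, the identity `D(DP) + (λ+q₀)P = -Q·v` holds identically iff
`2𝒟A + 𝒟²B = 0`, `𝒟²C + (λ+q₀)C = 0` and `Q = -𝒟²A + q₁B + 2(λ+q₀)𝒟B`;
in particular if `2𝒟A + 𝒟²B = 0` and `C = 0` then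
`D(DP) + (λ+q₀)P = -(½𝒟³B + 2(λ+q₀)𝒟B + q₁B)·v` (formula (6.9)). -/
theorem isospectral_evolution (N : ℕ) (hN : 7 ≤ N) (lam : ℝ)
    (A B C Q : SPt N → ℝ)
    (hA : ContDiff ℝ (⊤ : ℕ∞) A) (hB : ContDiff ℝ (⊤ : ℕ∞) B) (hC : ContDiff ℝ (⊤ : ℕ∞) C)
    (hQ : ContDiff ℝ (⊤ : ℕ∞) Q)
    (hAdep : ∀ p q : SPt N,
      (∀ (r : ℕ) (h : r < N + 1), r ≤ N - 4 → p (sqc N r h) = q (sqc N r h)) →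
      A p = A q)
    (hBdep : ∀ p q : SPt N,
      (∀ (r : ℕ) (h : r < N + 1), r ≤ N - 4 → p (sqc N r h) = q (sqc N r h)) →
      B p = B q)
    (hCdep : ∀ p q : SPt N,
      (∀ (r : ℕ) (h : r < N + 1), r ≤ N - 4 → p (sqc N r h) = q (sqc N r h)) →
      C p = C q)
    (hQdep : ∀ p q : SPt N,
      (∀ (r : ℕ) (h : r < N + 1), r ≤ N - 4 → p (sqc N r h) = q (sqc N r h)) →
      Q p = Q q) :
    ((∀ p : SPt N,
        Dtot lam (Dtot lam (fun q => A q * q (sv N) + B q * q (sv1 N) + C q)) p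
          + (lam + p (sqc N 0 (by omega)))
            * (A p * p (sv N) + B p * p (sv1 N) + C p)
        = -Q p * p (sv N))
      ↔ ((∀ p : SPt N, 2 * 𝒟 A p + 𝒟 (𝒟 B) p = 0)
          ∧ (∀ p : SPt N, 𝒟 (𝒟 C) p + (lam + p (sqc N 0 (by omega))) * C p = 0)
          ∧ ∀ p : SPt N,
              Q p = -𝒟 (𝒟 A) p + p (sqc N 1 (by omega)) * B p
                + 2 * (lam + p (sqc N 0 (by omega))) * 𝒟 B p))
    ∧ ((∀ p : SPt N, 2 * 𝒟 A p + 𝒟 (𝒟 B) p = 0) → (∀ p : SPt N, C p = 0) →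
        ∀ p : SPt N,
          Dtot lam (Dtot lam (fun q => A q * q (sv N) + B q * q (sv1 N) + C q)) p
            + (lam + p (sqc N 0 (by omega)))
              * (A p * p (sv N) + B p * p (sv1 N) + C p)
          = -((1 / 2) * 𝒟 (𝒟 (𝒟 B)) p
              + 2 * (lam + p (sqc N 0 (by omega))) * 𝒟 B p
              + p (sqc N 1 (by omega)) * B p) * p (sv N)) := by
  
  have hN1 : 1 ≤ N := by omega
  have dA : Differentiable ℝ A := hA.differentiable (by simp)
  have dB : Differentiable ℝ B := hB.differentiable (by simp)
  have dC : Differentiable ℝ C := hC.differentiable (by simp)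
  have hAd : QDep N (N - 4) A := hAdep
  have hBd : QDep N (N - 4) B := hBdep
  have hCd : QDep N (N - 4) C := hCdep
  have hQd : QDep N (N - 4) Q := hQdep
  have key := key_identity (M := N - 4) hN1 lam A B C hA hB hC hAd hBd hCd
  have hq0d : QDep N (N - 4 + 2) (fun p : SPt N => p (sqc N 0 (Nat.succ_pos N))) :=
    qdep_coord _ (by omega)
  have hq1d : QDep N (N - 4 + 2)
      (fun p : SPt N => p (sqc N 1 (by omega : 1 < N + 1))) :=
    qdep_coord _ (by omega)
  have hDDAd : QDep N (N - 4 + 2) (𝒟 (𝒟 A)) :=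
    qdep_𝒟 (qdep_𝒟 hAd dA) ((contDiff_𝒟 hA).differentiable (by simp))
  have hDDBd : QDep N (N - 4 + 2) (𝒟 (𝒟 B)) :=
    qdep_𝒟 (qdep_𝒟 hBd dB) ((contDiff_𝒟 hB).differentiable (by simp))
  have hDDCd : QDep N (N - 4 + 2) (𝒟 (𝒟 C)) :=
    qdep_𝒟 (qdep_𝒟 hCd dC) ((contDiff_𝒟 hC).differentiable (by simp))
  have hDAd : QDep N (N - 4 + 2) (𝒟 A) := (qdep_𝒟 hAd dA).mono (by omega)
  have hDBd : QDep N (N - 4 + 2) (𝒟 B) := (qdep_𝒟 hBd dB).mono (by omega)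
  have hαd : QDep N (N - 4 + 2) (fun p : SPt N =>
      (𝒟 (𝒟 A) p - p (sqc N 1 (by omega : 1 < N + 1)) * B p
        - 2 * (lam + p (sqc N 0 (Nat.succ_pos N))) * 𝒟 B p) + Q p) :=
    qdep_op2 (fun a b => a + b)
      (qdep_op2 (fun a b => a - b)
        (qdep_op2 (fun a b => a - b) hDDAd
          (qdep_op2 (fun a b => a * b) hq1d (hBd.mono (by omega))))
        (qdep_op2 (fun a b => a * b)
          (qdep_op2 (fun a b => a * b) (qdep_const 2)
            (qdep_op2 (fun a b => a + b) (qdep_const lam) hq0d)) hDBd))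
      (hQd.mono (by omega))
  have hβd : QDep N (N - 4 + 2) (fun p : SPt N => 2 * 𝒟 A p + 𝒟 (𝒟 B) p) :=
    qdep_op2 (fun a b => a + b)
      (qdep_op2 (fun a b => a * b) (qdep_const 2) hDAd) hDDBd
  have hγd : QDep N (N - 4 + 2) (fun p : SPt N =>
      𝒟 (𝒟 C) p + (lam + p (sqc N 0 (Nat.succ_pos N))) * C p) :=
    qdep_op2 (fun a b => a + b) hDDCd
      (qdep_op2 (fun a b => a * b)
        (qdep_op2 (fun a b => a + b) (qdep_const lam) hq0d)
        (hCd.mono (by omega)))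
  constructor
  · constructor
    · intro h
      have hsep : ∀ p : SPt N,
          ((𝒟 (𝒟 A) p - p (sqc N 1 (by omega : 1 < N + 1)) * B p
              - 2 * (lam + p (sqc N 0 (Nat.succ_pos N))) * 𝒟 B p) + Q p = 0)
          ∧ (2 * 𝒟 A p + 𝒟 (𝒟 B) p = 0)
          ∧ (𝒟 (𝒟 C) p + (lam + p (sqc N 0 (Nat.succ_pos N))) * C p = 0) := by
        intro p
        exact separate
          (α := fun p : SPt N =>
            (𝒟 (𝒟 A) p - p (sqc N 1 (by omega : 1 < N + 1)) * B p
              - 2 * (lam + p (sqc N 0 (Nat.succ_pos N))) * 𝒟 B p) + Q p)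
          (β := fun p : SPt N => 2 * 𝒟 A p + 𝒟 (𝒟 B) p)
          (γ := fun p : SPt N =>
            𝒟 (𝒟 C) p + (lam + p (sqc N 0 (Nat.succ_pos N))) * C p)
          (fun p t s => qdep_update_inv hαd p t s)
          (fun p t s => qdep_update_inv hβd p t s)
          (fun p t s => qdep_update_inv hγd p t s)
          (fun x => by linear_combination h x - key x) p
      refine ⟨fun p => (hsep p).2.1, fun p => (hsep p).2.2, fun p => ?_⟩
      have h1 := (hsep p).1
      linarith
    · rintro ⟨h1, h2, h3⟩ p
      linear_combination key p + p (sv N) * h3 p + p (sv1 N) * h1 p + h2 p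
  · intro h1 hC0 p
    have hAe : 𝒟 A = fun q => -(1 / 2 : ℝ) * 𝒟 (𝒟 B) q :=
      funext fun q => by have := h1 q; linarith
    have hDA : 𝒟 (𝒟 A) p = -(1 / 2 : ℝ) * 𝒟 (𝒟 (𝒟 B)) p := by
      rw [hAe]
      exact 𝒟_const_mul ((contDiff_𝒟 (contDiff_𝒟 hB)).differentiable (by simp)) _ p
    have hCe : C = fun _ => (0 : ℝ) := funext hC0
    have hDC : 𝒟 (𝒟 C) p = 0 := by
      rw [hCe, show 𝒟 (fun _ : SPt N => (0 : ℝ)) = fun _ => (0 : ℝ) from funext 𝒟_zero]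
      exact 𝒟_zero p
    linear_combination key p + p (sv N) * hDA + p (sv1 N) * h1 p + hDC
      + (lam + p (sqc N 0 (Nat.succ_pos N))) * hC0 p
end
end
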